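/- In the ring R = ℤ₂[x,y]/(x², y²), the ideal J generated by the images of x and y is countable strongly annihilated: the image of xy annihilates every element of J but does not annihilate any element outside J. -/

import Mathlib

/-- An ideal `I` is countable strongly annihilated if for each countable subset `S ⊆ I`
and each `b ∉ I` there exists `c` with `c * a = 0` for all `a ∈ S` but `c * b ≠ 0`. -/
def CountableStronglyAnnihilated {R : Type*} [CommRing R] (I : Ideal R) : Prop :=
  ∀ S : Set R, S.Countable → S ⊆ I → ∀ b ∉ I, ∃ c : R, (∀ a ∈ S, c * a = 0) ∧ c * b ≠ 0

/-- The ideal `(x², y²)` of `ℤ₂[x,y]`. -/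
noncomputable def I10 : Ideal (MvPolynomial (Fin 2) (ZMod 2)) :=
  Ideal.span {MvPolynomial.X 0 ^ 2, MvPolynomial.X 1 ^ 2}

/-- The ideal `(x̄, ȳ)` of `ℤ₂[x,y]/(x², y²)`. -/
noncomputable def J10 : Ideal (MvPolynomial (Fin 2) (ZMod 2) ⧸ I10) :=
  Ideal.span {Ideal.Quotient.mk I10 (MvPolynomial.X 0),
    Ideal.Quotient.mk I10 (MvPolynomial.X 1)}

/-! `J` is the kernel of the augmentation `R → ℤ₂`, so every `b ∉ J` is `1 + j` with `j ∈ J`.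
Since `xy` kills `J`, this gives `xy * b = xy ≠ 0`, so `xy` serves as the annihilator `c` for
every countable `S ⊆ J` at once. -/

theorem CountableStronglyAnnihilated.of_annihilator {R : Type*} [CommRing R] {I : Ideal R}
    (c : R) (hI : ∀ a ∈ I, c * a = 0) (hc : ∀ b ∉ I, c * b ≠ 0) :
    CountableStronglyAnnihilated I :=
  fun _ _ hS b hb => ⟨c, fun a ha => hI a (hS ha), hc b hb⟩

theorem mul_eq_self_of_sub_one_mem {R : Type*} [CommRing R] {I : Ideal R} {c b : R}
    (hI : ∀ a ∈ I, c * a = 0) (hb : b - 1 ∈ I) : c * b = c := by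
  rw [← sub_eq_zero, ← mul_sub_one, hI _ hb]

theorem Ideal.sub_one_mem_map_of_surjective {R S : Type*} [CommRing R] [CommRing S]
    {f : R →+* S} (hf : Function.Surjective f) {I : Ideal R}
    (hI : ∀ p ∉ I, p - 1 ∈ I) {b : S} (hb : b ∉ I.map f) : b - 1 ∈ I.map f := by
  obtain ⟨p, rfl⟩ := hf b
  have hp : p ∉ I := fun hp => hb (Ideal.mem_map_of_mem f hp)
  simpa using Ideal.mem_map_of_mem f (hI p hp)

namespace MvPolynomial

theorem sub_C_constantCoeff_mem_idealOfVars {σ R : Type*} [CommRing R] (p : MvPolynomial σ R) :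
    p - C (constantCoeff p) ∈ idealOfVars σ R := by
  rw [← pow_one (idealOfVars σ R), mem_pow_idealOfVars_iff']
  intro x hx
  obtain rfl : x = 0 := by simpa [Finsupp.degree_eq_zero_iff] using hx
  simp [constantCoeff_eq]

theorem sub_one_mem_idealOfVars_of_notMem {σ : Type*} {p : MvPolynomial σ (ZMod 2)}
    (hp : p ∉ idealOfVars σ (ZMod 2)) : p - 1 ∈ idealOfVars σ (ZMod 2) := by
  have hdecomp := sub_C_constantCoeff_mem_idealOfVars p
  obtain h | h : constantCoeff p = 0 ∨ constantCoeff p = 1 := by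
    generalize constantCoeff p = z; decide +revert
  · exact absurd (by simpa [h] using hdecomp) hp
  · simpa [h] using hdecomp

end MvPolynomial

open MvPolynomial

theorem J10_eq_map_idealOfVars :
    J10 = (idealOfVars (Fin 2) (ZMod 2)).map (Ideal.Quotient.mk I10) := by
  rw [J10, idealOfVars, Ideal.map_span, ← Set.range_comp, Fin.range_fin_succ, Fin.range_fin_succ,
    Set.range_eq_empty, insert_empty_eq]
  rfl

theorem X_zero_mul_X_one_notMem_I10 : X 0 * X 1 ∉ I10 := by
  have hI10 : I10 = Ideal.span ((monomial · (1 : ZMod 2)) ''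
      {Finsupp.single 0 2, Finsupp.single 1 2}) := by
    simp [I10, Set.image_insert_eq, X_pow_eq_monomial]
  have hxy : (X 0 * X 1 : MvPolynomial (Fin 2) (ZMod 2)) =
      monomial (Finsupp.single 0 1 + Finsupp.single 1 1) 1 := by
    simp [X, monomial_mul]
  rw [hI10, hxy, mem_ideal_span_monomial_image]
  simp [support_monomial, Finsupp.single_le_iff]

theorem mk_X_zero_mul_X_one_mul_of_mem_J10 {a : MvPolynomial (Fin 2) (ZMod 2) ⧸ I10}
    (ha : a ∈ J10) : Ideal.Quotient.mk I10 (X 0 * X 1) * a = 0 := by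
  have hX0 : Ideal.Quotient.mk I10 (X 0 * X 1) * Ideal.Quotient.mk I10 (X 0) = 0 := by
    rw [← map_mul, Ideal.Quotient.eq_zero_iff_mem]
    convert I10.mul_mem_left (X 1) (Ideal.subset_span (by simp) : X 0 ^ 2 ∈ I10) using 1
    ring
  have hX1 : Ideal.Quotient.mk I10 (X 0 * X 1) * Ideal.Quotient.mk I10 (X 1) = 0 := by
    rw [← map_mul, Ideal.Quotient.eq_zero_iff_mem]
    convert I10.mul_mem_left (X 0) (Ideal.subset_span (by simp) : X 1 ^ 2 ∈ I10) using 1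
    ring
  obtain ⟨u, v, rfl⟩ := Ideal.mem_span_pair.mp ha
  rw [mul_add, mul_left_comm, mul_left_comm _ v, hX0, hX1, mul_zero, mul_zero, add_zero]

theorem sub_one_mem_J10_of_notMem {b : MvPolynomial (Fin 2) (ZMod 2) ⧸ I10} (hb : b ∉ J10) :
    b - 1 ∈ J10 := by
  rw [J10_eq_map_idealOfVars] at hb ⊢
  exact Ideal.sub_one_mem_map_of_surjective Ideal.Quotient.mk_surjective
    (fun _ => sub_one_mem_idealOfVars_of_notMem) hb

theorem stmt10 :
    CountableStronglyAnnihilated J10 ∧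
    (∀ a ∈ J10, Ideal.Quotient.mk I10 (MvPolynomial.X 0 * MvPolynomial.X 1) * a = 0) ∧
    (∀ b ∉ J10, Ideal.Quotient.mk I10 (MvPolynomial.X 0 * MvPolynomial.X 1) * b ≠ 0) := by
  have hJ : ∀ a ∈ J10, Ideal.Quotient.mk I10 (X 0 * X 1) * a = 0 :=
    fun _ => mk_X_zero_mul_X_one_mul_of_mem_J10
  have hJc : ∀ b ∉ J10, Ideal.Quotient.mk I10 (X 0 * X 1) * b ≠ 0 := by
    intro b hb
    rw [mul_eq_self_of_sub_one_mem hJ (sub_one_mem_J10_of_notMem hb), Ne,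
      Ideal.Quotient.eq_zero_iff_mem]
    exact X_zero_mul_X_one_notMem_I10
  exact ⟨.of_annihilator _ hJ hJc, hJ, hJc⟩
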